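/- Let S and A be nonempty finite sets and let p be a transition kernel as defined. Let k_∞(s,a) = sup_{n∈ℕ} (T_p^n(0))(s,a). Let π : S → A be any stationary deterministic policy satisfying k_∞(s, π(s)) = min_{a ∈ A} k_∞(s,a) for every s ∈ S. Then for every (s,a) ∈ S × A, the trajectory law satisfies P_{s,a,π}( D ≤ k_∞(s,a) ) = 1; that is, with probability one the total damage along the trajectory started from (s,a) under π does not exceed k_∞(s,a). -/

import Mathlib

open scoped Classical ENNReal

variable {S A : Type*}

/-- The budget operator `T_p` associated with a transition kernel
`p : S → A → PMF (S × Bool)` (second component = binary damage indicator):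
`(T_p k)(s,a) = max_{s' : p(s'|s,a) > 0} [ 1{p(s',1|s,a) > 0} + min_{a'} k(s',a') ]`,
where `p(s'|s,a) = p(s',0|s,a) + p(s',1|s,a)`. -/
noncomputable def budgetOp [Fintype S] [Fintype A] (p : S → A → PMF (S × Bool))
    (k : S → A → ℕ∞) : S → A → ℕ∞ := fun s a =>
  (Finset.univ.filter fun s' : S => 0 < p s a (s', false) + p s a (s', true)).sup
    fun s' => (if 0 < p s a (s', true) then 1 else 0) + Finset.univ.inf fun a' => k s' a'

/-- Probability, under the Markov chain started at `(s,a)` and thereafter governed by the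
stationary deterministic policy `π`, that the trajectory starts with the given finite
prefix of `(state, damage)` pairs. -/
noncomputable def pathProb (p : S → A → PMF (S × Bool)) (π : S → A) :
    S → A → List (S × Bool) → ℝ≥0∞
  | _, _, [] => 1
  | s, a, x :: xs => p s a x * pathProb p π x.1 (π x.1) xs

/-- Total damage accumulated along a finite trajectory prefix. -/
def pathDamage : List (S × Bool) → ℕ := fun l => (l.map fun x => if x.2 then 1 else 0).sum

/-- `SafeAS p π s a k` states that, with probability one under the trajectory law
`P_{s,a,π}` (which exists by Ionescu–Tulcea), the total damage `D = Σ_{t≥1} d_t` satisfies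
`D ≤ k`.  Since the state space is finite, this is equivalent to: every finite trajectory
prefix occurring with positive probability has accumulated damage at most `k`, which is how
we encode it (this Mathlib version does not provide the Ionescu–Tulcea construction). -/
def SafeAS (p : S → A → PMF (S × Bool)) (π : S → A) (s : S) (a : A) (k : ℕ∞) : Prop :=
  ∀ l : List (S × Bool), pathProb p π s a l ≠ 0 → (pathDamage l : ℕ∞) ≤ k

/-- The minimal budget `k_*(s,a)`: the least `k ∈ ℕ ∪ {∞}` for which some stationary
deterministic policy keeps total damage `≤ k` with probability one from `(s,a)`. -/
noncomputable def minBudget (p : S → A → PMF (S × Bool)) (s : S) (a : A) : ℕ∞ :=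
  sInf {k : ℕ∞ | ∃ π : S → A, SafeAS p π s a k}

section aux
variable [Fintype S] [Fintype A] (p : S → A → PMF (S × Bool))

lemma budgetOp_mono {k k' : S → A → ℕ∞} (h : ∀ s a, k s a ≤ k' s a) :
    ∀ s a, budgetOp p k s a ≤ budgetOp p k' s a := by
  intro s a
  apply Finset.sup_mono_fun
  intro s' _
  exact add_le_add le_rfl (Finset.inf_mono_fun fun a' _ => h s' a')

lemma iter_mono (n : ℕ) :
    ∀ s a, (budgetOp p)^[n] (fun _ _ => 0) s a ≤ (budgetOp p)^[n+1] (fun _ _ => 0) s a := by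
  induction n with
  | zero => intro s a; exact zero_le
  | succ n ih =>
    intro s a
    rw [Function.iterate_succ_apply', Function.iterate_succ_apply']
    exact budgetOp_mono p ih s a

lemma iter_mono' (m n : ℕ) (h : m ≤ n) :
    ∀ s a, (budgetOp p)^[m] (fun _ _ => 0) s a ≤ (budgetOp p)^[n] (fun _ _ => 0) s a := by
  induction n with
  | zero => intro s a; obtain rfl := Nat.le_zero.mp h; exact le_rfl
  | succ n ih =>
    intro s a
    rcases Nat.lt_or_ge m (n+1) with h' | h'
    · exact (ih (by omega) s a).trans (iter_mono p n s a)
    · have : m = n + 1 := by omega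
      subst this; exact le_rfl

/-- k∞ is a pre-fixed point: T k∞ ≤ k∞. -/
lemma budgetOp_kinf_le [Nonempty A] :
    ∀ s a, budgetOp p (fun s a => ⨆ n : ℕ, (budgetOp p)^[n] (fun _ _ => 0) s a) s a ≤
      ⨆ n : ℕ, (budgetOp p)^[n] (fun _ _ => 0) s a := by
  intro s a
  apply Finset.sup_le
  intro s' hs'
  have hswap : (Finset.univ.inf fun a' : A => ⨆ n : ℕ, (budgetOp p)^[n] (fun _ _ => 0) s' a')
      = ⨆ n : ℕ, Finset.univ.inf fun a' : A => (budgetOp p)^[n] (fun _ _ => 0) s' a' := by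
    simp only [Finset.inf_univ_eq_iInf]
    exact (Set.iSup_iInf_of_monotone (f := fun (a' : A) (n : ℕ) =>
      (budgetOp p)^[n] (fun _ _ => 0) s' a')
      (fun a' m n hmn => iter_mono' p m n hmn s' a')).symm
  rw [hswap, ENat.add_iSup]
  apply iSup_le
  intro n
  calc (if 0 < p s a (s', true) then 1 else 0) +
        Finset.univ.inf (fun a' : A => (budgetOp p)^[n] (fun _ _ => 0) s' a')
      ≤ (budgetOp p)^[n+1] (fun _ _ => 0) s a := by
        rw [Function.iterate_succ_apply']
        exact Finset.le_sup (f := fun s' => (if 0 < p s a (s', true) then 1 else 0) +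
          Finset.univ.inf fun a' : A => (budgetOp p)^[n] (fun _ _ => 0) s' a') hs'
    _ ≤ ⨆ n : ℕ, (budgetOp p)^[n] (fun _ _ => 0) s a := le_iSup (fun n => (budgetOp p)^[n] (fun _ _ => 0) s a) (n+1)

end aux

/-- any stationary deterministic policy that is greedy with respect to
`k_∞ = sup_n T_p^n(0)` (i.e. `k_∞(s,π(s)) = min_a k_∞(s,a)` for all `s`) keeps the total
damage below `k_∞(s,a)` with probability one from every `(s,a)`. -/
theorem greedy_policy_is_safe
    [Fintype S] [Nonempty S] [Fintype A] [Nonempty A]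
    (p : S → A → PMF (S × Bool)) (π : S → A)
    (hgreedy : ∀ s : S,
      (⨆ n : ℕ, (budgetOp p)^[n] (fun _ _ => 0) s (π s)) =
        Finset.univ.inf fun a : A => ⨆ n : ℕ, (budgetOp p)^[n] (fun _ _ => 0) s a) :
    ∀ (s : S) (a : A),
      SafeAS p π s a (⨆ n : ℕ, (budgetOp p)^[n] (fun _ _ => 0) s a) := by
  set kinf : S → A → ℕ∞ := fun s a => ⨆ n : ℕ, (budgetOp p)^[n] (fun _ _ => 0) s a with hk
  suffices h : ∀ (l : List (S × Bool)) (s : S) (a : A),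
      pathProb p π s a l ≠ 0 → (pathDamage l : ℕ∞) ≤ kinf s a from
    fun s a l hl => h l s a hl
  intro l
  induction l with
  | nil => intro s a _; simp [pathDamage]
  | cons x xs ih =>
    intro s a hl
    obtain ⟨s', d⟩ := x
    rw [pathProb] at hl
    have hp : p s a (s', d) ≠ 0 := fun h0 => hl (by simp [h0])
    have hxs : pathProb p π s' (π s') xs ≠ 0 := fun h0 => hl (by simp [h0])
    have hdam : (pathDamage ((s', d) :: xs) : ℕ∞) =
        ((if d then 1 else 0 : ℕ) : ℕ∞) + (pathDamage xs : ℕ∞) := by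
      simp [pathDamage]
    rw [hdam]
    have hmem : s' ∈ Finset.univ.filter
        fun s'' : S => 0 < p s a (s'', false) + p s a (s'', true) := by
      simp only [Finset.mem_filter, Finset.mem_univ, true_and]
      rcases d with _ | _
      · exact lt_of_lt_of_le (pos_iff_ne_zero.mpr hp) le_self_add
      · exact lt_of_lt_of_le (pos_iff_ne_zero.mpr hp) le_add_self
    have h1 : ((if d then 1 else 0 : ℕ) : ℕ∞) ≤
        (if 0 < p s a (s', true) then 1 else 0) := by
      rcases d with _ | _
      · simp
      · simp only [if_true]
        rw [if_pos (pos_iff_ne_zero.mpr hp)]; exact_mod_cast le_rfl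
    have h2 : (pathDamage xs : ℕ∞) ≤ Finset.univ.inf fun a' : A => kinf s' a' := by
      calc (pathDamage xs : ℕ∞) ≤ kinf s' (π s') := ih s' (π s') hxs
        _ = Finset.univ.inf fun a' : A => kinf s' a' := hgreedy s'
    calc ((if d then 1 else 0 : ℕ) : ℕ∞) + (pathDamage xs : ℕ∞)
        ≤ (if 0 < p s a (s', true) then 1 else 0) +
          Finset.univ.inf fun a' : A => kinf s' a' := add_le_add h1 h2
      _ ≤ budgetOp p kinf s a := Finset.le_sup (f := fun s'' =>
          (if 0 < p s a (s'', true) then 1 else 0) +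
            Finset.univ.inf fun a' : A => kinf s'' a') hmem
      _ ≤ kinf s a := budgetOp_kinf_le p s a
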